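/- arXiv:2405.11134 — 10 statements merged into one kernel-verified Lean document; each statement's English description precedes it below -/
import Mathlib

section
/- For every odd integer p ≥ 3, with f₂(p) = (p+1)/(2(p²+2p+2)), one has f₂(p-2) + f₂(p) - 1/p = -4/(p⁵ + 4p). -/
/-!
The two denominators of `f₂(p - 2)` and `f₂(p)` are `p² - 2p + 2` and `p² + 2p + 2`, whose product is
`p⁴ + 4` (Sophie Germain's identity). Over that common denominator the numerators add up to `2p³`,
so `f₂(p - 2) + f₂(p) = p³ / (p⁴ + 4)`, and subtracting `1/p` leaves `-4 / (p (p⁴ + 4))`.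
-/

section

variable {K : Type*} [Field K]

def madhavaCorrectionTwo (x : K) : K :=
  (x + 1) / (2 * (x ^ 2 + 2 * x + 2))

theorem madhavaCorrectionTwo_sub_two (x : K) :
    madhavaCorrectionTwo (x - 2) = (x - 1) / (2 * (x ^ 2 - 2 * x + 2)) := by
  unfold madhavaCorrectionTwo
  congr 1 <;> ring

variable [LinearOrder K] [IsStrictOrderedRing K]

theorem sq_add_two_mul_add_two_pos (x : K) : 0 < x ^ 2 + 2 * x + 2 := by
  nlinarith [sq_nonneg (x + 1)]

theorem sq_sub_two_mul_add_two_pos (x : K) : 0 < x ^ 2 - 2 * x + 2 := by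
  nlinarith [sq_nonneg (x - 1)]

theorem madhavaCorrectionTwo_sub_two_add_self (x : K) :
    madhavaCorrectionTwo (x - 2) + madhavaCorrectionTwo x = x ^ 3 / (x ^ 4 + 4) := by
  have hminus := (mul_pos two_pos (sq_sub_two_mul_add_two_pos x)).ne'
  have hplus := (mul_pos two_pos (sq_add_two_mul_add_two_pos x)).ne'
  have hquartic : x ^ 4 + 4 ≠ 0 := by positivity
  rw [madhavaCorrectionTwo_sub_two, madhavaCorrectionTwo, div_add_div _ _ hminus hplus,
    div_eq_div_iff (mul_ne_zero hminus hplus) hquartic]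
  ring

theorem madhavaCorrectionTwo_sthaulya {x : K} (hx : x ≠ 0) :
    madhavaCorrectionTwo (x - 2) + madhavaCorrectionTwo x - 1 / x = -4 / (x ^ 5 + 4 * x) := by
  have hquartic : x ^ 4 + 4 ≠ 0 := by positivity
  have hquintic : x ^ 5 + 4 * x = x * (x ^ 4 + 4) := by ring
  rw [madhavaCorrectionTwo_sub_two_add_self, hquintic, div_sub_div _ _ hquartic hx,
    div_eq_div_iff (mul_ne_zero hquartic hx) (mul_ne_zero hx hquartic)]
  ring

end

theorem madhava_sthaulya_second_general (p : ℤ) (hp : 3 ≤ p) :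
    (((p : ℝ) - 2) + 1) / (2 * (((p : ℝ) - 2) ^ 2 + 2 * ((p : ℝ) - 2) + 2))
      + ((p : ℝ) + 1) / (2 * ((p : ℝ) ^ 2 + 2 * (p : ℝ) + 2)) - 1 / (p : ℝ)
      = -4 / ((p : ℝ) ^ 5 + 4 * (p : ℝ)) := by
  have hp_ne : (p : ℝ) ≠ 0 := by exact_mod_cast (by omega : p ≠ 0)
  exact madhavaCorrectionTwo_sthaulya hp_ne

theorem madhava_sthaulya_second (p : ℤ) (hp : 3 ≤ p) (hodd : Odd p) :
    (((p : ℝ) - 2) + 1) / (2 * (((p : ℝ) - 2) ^ 2 + 2 * ((p : ℝ) - 2) + 2))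
      + ((p : ℝ) + 1) / (2 * ((p : ℝ) ^ 2 + 2 * (p : ℝ) + 2)) - 1 / (p : ℝ)
      = -4 / ((p : ℝ) ^ 5 + 4 * (p : ℝ)) :=
  madhava_sthaulya_second_general p hp
end

section
/- For every odd integer p ≥ 3, with f₃(p) = (p²+2p+5)/(2p³+6p²+16p+12), one has f₃(p-2) + f₃(p) - 1/p = 36/(p⁷ + 7p⁵ + 28p³ - 36p). -/
/-!
The denominator of `f₃(x)` factors as `2 (x + 1) ((x + 1)² + 5)`, so at `x = p - 2` and `x = p` it is
`2 (p - 1) ((p - 1)² + 5)` and `2 (p + 1) ((p + 1)² + 5)`. The denominator `p⁷ + 7p⁵ + 28p³ - 36p` on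
the right is `p (p - 1)(p + 1)((p - 1)² + 5)((p + 1)² + 5)`, the common denominator of the left-hand
side, and once it is cleared the identity is a polynomial identity.
-/

section CommRing

variable {R : Type*} [CommRing R]

theorem madhavaF3_denom_eq (x : R) :
    2 * x ^ 3 + 6 * x ^ 2 + 16 * x + 12 = 2 * (x + 1) * ((x + 1) ^ 2 + 5) := by
  ring

theorem sthaulya_denom_eq (p : R) :
    p ^ 7 + 7 * p ^ 5 + 28 * p ^ 3 - 36 * p
      = p * (p - 1) * (p + 1) * (((p - 1) ^ 2 + 5) * ((p + 1) ^ 2 + 5)) := by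
  ring

end CommRing

section Field

variable {K : Type*} [Field K]

def madhavaF3 (x : K) : K :=
  (x ^ 2 + 2 * x + 5) / (2 * x ^ 3 + 6 * x ^ 2 + 16 * x + 12)

theorem madhavaF3_sub_two_add_madhavaF3_sub_inv (h2 : (2 : K) ≠ 0) (p : K)
    (hp : p ^ 7 + 7 * p ^ 5 + 28 * p ^ 3 - 36 * p ≠ 0) :
    madhavaF3 (p - 2) + madhavaF3 p - 1 / p
      = 36 / (p ^ 7 + 7 * p ^ 5 + 28 * p ^ 3 - 36 * p) := by
  have hfactors := sthaulya_denom_eq p ▸ hp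
  simp only [mul_ne_zero_iff] at hfactors
  obtain ⟨⟨⟨hp0, hpm⟩, hpp⟩, hqm, hqp⟩ := hfactors
  have hden_sub_two : 2 * (p - 2) ^ 3 + 6 * (p - 2) ^ 2 + 16 * (p - 2) + 12 ≠ 0 := by
    rw [madhavaF3_denom_eq, show p - 2 + 1 = p - 1 by ring]
    exact mul_ne_zero (mul_ne_zero h2 hpm) hqm
  have hden : 2 * p ^ 3 + 6 * p ^ 2 + 16 * p + 12 ≠ 0 := by
    rw [madhavaF3_denom_eq]
    exact mul_ne_zero (mul_ne_zero h2 hpp) hqp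
  have hden_sum := mul_ne_zero hden_sub_two hden
  rw [madhavaF3, madhavaF3, div_add_div _ _ hden_sub_two hden, div_sub_div _ _ hden_sum hp0,
    div_eq_div_iff (mul_ne_zero hden_sum hp0) hp]
  ring

end Field

theorem sthaulya_denom_pos {p : ℝ} (hp : 1 < p) :
    0 < p ^ 7 + 7 * p ^ 5 + 28 * p ^ 3 - 36 * p := by
  have hpm : 0 < p - 1 := sub_pos.2 hp
  have hp0 : 0 < p := by linarith
  rw [sthaulya_denom_eq]
  positivity

theorem madhava_sthaulya_third_general (p : ℤ) (hp : 3 ≤ p) :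
    (((p : ℝ) - 2) ^ 2 + 2 * ((p : ℝ) - 2) + 5)
        / (2 * ((p : ℝ) - 2) ^ 3 + 6 * ((p : ℝ) - 2) ^ 2 + 16 * ((p : ℝ) - 2) + 12)
      + ((p : ℝ) ^ 2 + 2 * (p : ℝ) + 5)
        / (2 * (p : ℝ) ^ 3 + 6 * (p : ℝ) ^ 2 + 16 * (p : ℝ) + 12)
      - 1 / (p : ℝ)
      = 36 / ((p : ℝ) ^ 7 + 7 * (p : ℝ) ^ 5 + 28 * (p : ℝ) ^ 3 - 36 * (p : ℝ)) := by
  have hp1 : (1 : ℝ) < p := by exact_mod_cast (show 1 < p by omega)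
  exact madhavaF3_sub_two_add_madhavaF3_sub_inv two_ne_zero (p : ℝ) (sthaulya_denom_pos hp1).ne'

theorem madhava_sthaulya_third (p : ℤ) (hp : 3 ≤ p) (hodd : Odd p) :
    (((p : ℝ) - 2) ^ 2 + 2 * ((p : ℝ) - 2) + 5)
        / (2 * ((p : ℝ) - 2) ^ 3 + 6 * ((p : ℝ) - 2) ^ 2 + 16 * ((p : ℝ) - 2) + 12)
      + ((p : ℝ) ^ 2 + 2 * (p : ℝ) + 5)
        / (2 * (p : ℝ) ^ 3 + 6 * (p : ℝ) ^ 2 + 16 * (p : ℝ) + 12)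
      - 1 / (p : ℝ)
      = 36 / ((p : ℝ) ^ 7 + 7 * (p : ℝ) ^ 5 + 28 * (p : ℝ) ^ 3 - 36 * (p : ℝ)) :=
  madhava_sthaulya_third_general p hp
end

section
/- There is no rational function f (with real coefficients, not identically undefined) satisfying f(p-2) + f(p) = 1/p for all sufficiently large real p. -/
open Polynomial

theorem no_rational_function_exact_correction :
    ¬ ∃ (q r : Polynomial ℝ), r ≠ 0 ∧ ∃ N : ℝ, ∀ p : ℝ, N < p →
      Polynomial.eval (p - 2) q / Polynomial.eval (p - 2) r
        + Polynomial.eval p q / Polynomial.eval p r = 1 / p := by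
  rintro ⟨q, r, hr, N, hN⟩
  classical
  set d : Polynomial ℝ := GCDMonoid.gcd q r with hd
  set q₁ : Polynomial ℝ := q / d with hq₁
  set r₁ : Polynomial ℝ := r / d with hr₁
  have hd0 : d ≠ 0 := gcd_ne_zero_of_right hr
  have hcop : IsCoprime q₁ r₁ := isCoprime_div_gcd_div_gcd hr
  have hqeq : d * q₁ = q := EuclideanDomain.mul_div_cancel' hd0 (gcd_dvd_left q r)
  have hreq : d * r₁ = r := EuclideanDomain.mul_div_cancel' hd0 (gcd_dvd_right q r)
  have hr₁0 : r₁ ≠ 0 := by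
    intro h
    apply hr
    rw [← hreq, h, mul_zero]
  -- no common real root
  have hkey : ∀ x : ℝ, r₁.eval x = 0 → q₁.eval x ≠ 0 := by
    intro x hx hqx
    obtain ⟨u, v, huv⟩ := hcop
    have := congrArg (Polynomial.eval x) huv
    simp [hx, hqx] at this
  -- the polynomial identity
  set P : Polynomial ℝ :=
    X * (q₁.comp (X - C 2)) * r₁ + X * q₁ * (r₁.comp (X - C 2))
      - (r₁.comp (X - C 2)) * r₁ with hP
  have hg : r * r.comp (X - C 2) ≠ 0 := by
    apply mul_ne_zero hr
    intro h
    apply hr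
    apply Polynomial.eq_zero_of_infinite_isRoot
    apply Set.infinite_of_injective_forall_mem (f := fun x : ℝ => x - 2)
    · intro a b hab; simpa using hab
    · intro x
      have := congrArg (Polynomial.eval x) h
      simpa [Polynomial.eval_comp] using this
  have hP0 : P = 0 := by
    apply Polynomial.eq_zero_of_infinite_isRoot
    apply Set.Infinite.mono (s := Set.Ioi (max N 0) \ {x | (r * r.comp (X - C 2)).IsRoot x})
    · rintro p ⟨hp1, hp2⟩
      have hpN : N < p := lt_of_le_of_lt (le_max_left _ _) hp1
      have hp0 : (0:ℝ) < p := lt_of_le_of_lt (le_max_right _ _) hp1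
      simp only [Set.mem_setOf_eq, Polynomial.IsRoot, Polynomial.eval_mul] at hp2
      have hrp : r.eval p ≠ 0 := fun h => hp2 (by simp [h])
      have hrp2 : r.eval (p - 2) ≠ 0 := fun h => hp2 (by simp [Polynomial.eval_comp, h])
      have hd1 : d.eval p ≠ 0 := by intro h; apply hrp; rw [← hreq]; simp [h]
      have hr1 : r₁.eval p ≠ 0 := by intro h; apply hrp; rw [← hreq]; simp [h]
      have hd2 : d.eval (p - 2) ≠ 0 := by intro h; apply hrp2; rw [← hreq]; simp [h]
      have hr2 : r₁.eval (p - 2) ≠ 0 := by intro h; apply hrp2; rw [← hreq]; simp [h]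
      have heq := hN p hpN
      rw [← hqeq, ← hreq] at heq
      simp only [Polynomial.eval_mul] at heq
      rw [mul_div_mul_left _ _ hd2, mul_div_mul_left _ _ hd1] at heq
      have hp0' : p ≠ 0 := ne_of_gt hp0
      field_simp at heq
      show P.eval p = 0
      simp only [hP, Polynomial.eval_add, Polynomial.eval_sub, Polynomial.eval_mul,
        Polynomial.eval_comp, Polynomial.eval_X, Polynomial.eval_ofNat, Polynomial.eval_C]
      linear_combination heq
    · exact (Set.Ioi_infinite _).diff (Polynomial.finite_setOf_isRoot hg)
  -- evaluated identity
  have hE : ∀ x : ℝ, x * q₁.eval (x - 2) * r₁.eval x + x * q₁.eval x * r₁.eval (x - 2)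
      = r₁.eval (x - 2) * r₁.eval x := by
    intro x
    have := congrArg (Polynomial.eval x) hP0
    simp only [hP, Polynomial.eval_add, Polynomial.eval_sub, Polynomial.eval_mul,
      Polynomial.eval_comp, Polynomial.eval_X, Polynomial.eval_ofNat, Polynomial.eval_C,
      Polynomial.eval_zero] at this
    linarith [this]
  -- real roots of r₁
  set s : Finset ℝ := r₁.roots.toFinset with hs
  have hmem : ∀ x : ℝ, x ∈ s ↔ r₁.eval x = 0 := by
    intro x
    simp [hs, Polynomial.mem_roots, hr₁0, Polynomial.IsRoot]
  have hne : s.Nonempty := by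
    have h0 := hE 0
    simp only [zero_mul, zero_add, mul_zero] at h0
    rcases mul_eq_zero.mp h0.symm with h | h
    · exact ⟨-2, (hmem _).mpr (by simpa using h)⟩
    · exact ⟨0, (hmem _).mpr h⟩
  set a : ℝ := s.max' hne with ha
  set b : ℝ := s.min' hne with hb
  have hra : r₁.eval a = 0 := (hmem a).mp (s.max'_mem hne)
  have hrb : r₁.eval b = 0 := (hmem b).mp (s.min'_mem hne)
  have hra2 : r₁.eval (a + 2) ≠ 0 := by
    intro h
    have : a + 2 ≤ a := s.le_max' _ ((hmem _).mpr h)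
    linarith
  have hrb2 : r₁.eval (b - 2) ≠ 0 := by
    intro h
    have : b ≤ b - 2 := s.min'_le _ ((hmem _).mpr h)
    linarith
  have hA : a = -2 := by
    have h := hE (a + 2)
    rw [show a + 2 - 2 = a by ring, hra] at h
    simp only [mul_zero, add_zero, zero_mul] at h
    have := mul_eq_zero.mp (by linarith [h] : (a + 2) * (q₁.eval a * r₁.eval (a + 2)) = 0)
    rcases this with h' | h'
    · linarith
    · rcases mul_eq_zero.mp h' with h'' | h''
      · exact absurd h'' (hkey a hra)
      · exact absurd h'' hra2
  have hB : b = 0 := by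
    have h := hE b
    rw [hrb] at h
    simp only [mul_zero, zero_add, zero_mul] at h
    have := mul_eq_zero.mp (by linarith [h] : b * (q₁.eval b * r₁.eval (b - 2)) = 0)
    rcases this with h' | h'
    · exact h'
    · rcases mul_eq_zero.mp h' with h'' | h''
      · exact absurd h'' (hkey b hrb)
      · exact absurd h'' hrb2
  have : b ≤ a := s.min'_le _ (s.max'_mem hne)
  rw [hA, hB] at this
  linarith
end

section
/- The series 3/4 + ∑_{n≥2} (-1)ⁿ/((2n-1)³ - (2n-1)) converges to π/4; equivalently π/4 = 3/4 + 1/(3³-3) - 1/(5³-5) + 1/(7³-7) - ⋯. -/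
open Filter Finset Real

lemma madhava_key (N : ℕ) (hN : 1 ≤ N) :
    3 / 4 + ∑ n ∈ Finset.Icc 2 N,
        (-1 : ℝ) ^ n / ((2 * (n : ℝ) - 1) ^ 3 - (2 * (n : ℝ) - 1))
      = (∑ i ∈ Finset.range N, (-1 : ℝ) ^ i / (2 * (i : ℝ) + 1)) + (-1) ^ N / (4 * N) := by
  induction N with
  | zero => omega
  | succ n ih =>
    rcases Nat.lt_or_ge n 1 with h | h
    · interval_cases n
      norm_num
    · have h2 : 2 ≤ n + 1 := by omega
      rw [Finset.sum_Icc_succ_top h2, Finset.sum_range_succ, ← add_assoc, ih h]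
      have hn : (1:ℝ) ≤ (n:ℝ) := by exact_mod_cast h
      have h1 : (n:ℝ) ≠ 0 := by positivity
      have h3 : (2*(n:ℝ)+1) ≠ 0 := by positivity
      have h4 : (2*(n:ℝ)+3) ≠ 0 := by positivity
      have h5 : ((n:ℝ)+1) ≠ 0 := by positivity
      have h6 : (2*((n:ℕ)+1:ℕ):ℝ) - 1 = 2*(n:ℝ)+1 := by push_cast; ring
      have h7 : ((2*(n:ℝ)+1)^3 - (2*(n:ℝ)+1)) ≠ 0 := by
        have : (2*(n:ℝ)+1)^3 - (2*(n:ℝ)+1) = (2*n)*(2*n+1)*(2*n+2) := by ring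
        rw [this]; positivity
      have h8 : (2*((n:ℝ)+1)-1)^3 - (2*((n:ℝ)+1)-1) = (2*(n:ℝ)+1)^3 - (2*(n:ℝ)+1) := by ring
      push_cast
      rw [h8, pow_succ]
      rw [show (2*(n:ℝ)+1)^3 - (2*(n:ℝ)+1) = (2*n)*(2*n+1)*(2*n+2) by ring]
      field_simp
      ring

theorem madhava_series_first_correction :
    Tendsto (fun N : ℕ => 3 / 4 + ∑ n ∈ Finset.Icc 2 N,
        (-1 : ℝ) ^ n / ((2 * (n : ℝ) - 1) ^ 3 - (2 * (n : ℝ) - 1)))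
      atTop (nhds (π / 4)) := by
  have h1 : Tendsto (fun N : ℕ => (∑ i ∈ Finset.range N, (-1 : ℝ) ^ i / (2 * (i : ℝ) + 1))
      + (-1) ^ N / (4 * N)) atTop (nhds (π / 4 + 0)) := by
    apply Tendsto.add Real.tendsto_sum_pi_div_four
    apply squeeze_zero_norm (a := fun N : ℕ => 1 / (4 * (N:ℝ)))
    · intro n
      rcases Nat.eq_zero_or_pos n with rfl | hn
      · simp
      · have : (0:ℝ) < n := by exact_mod_cast hn
        rw [norm_div, norm_pow, norm_neg, norm_one, one_pow]
        simp [abs_of_pos, this]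
    · have := tendsto_one_div_atTop_nhds_zero_nat (𝕜 := ℝ)
      have h := this.const_mul (1/4 : ℝ)
      simp only [mul_zero] at h
      convert h using 2 with n
      ring
  rw [add_zero] at h1
  apply h1.congr'
  filter_upwards [eventually_ge_atTop 1] with N hN
  exact (madhava_key N hN).symm
end

section
/- The series ∑_{n≥1} (-1)^{n-1}·4/((2n-1)⁵ + 4(2n-1)) converges to π/4; equivalently π/4 = 4/(1⁵+4) - 4/(3⁵+12) + 4/(5⁵+20) - ⋯. -/
open Filter Finset Real
open scoped Topology

/-!
Sophie Germain's factorisation `p⁴ + 4 = (p² - 2p + 2)(p² + 2p + 2)` splits the term at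
`p = 2i + 1` into `1/p - c(i + 1) - c(i)` with `c(x) = x / (4x² + 1)`. In the alternating sum the
corrections telescope, leaving the Leibniz partial sum plus `(-1)ᴺ c(N)`, which tends to `0`.
-/

lemma sum_Icc_one_eq_sum_range {M : Type*} [AddCommMonoid M] (f : ℕ → M) (N : ℕ) :
    ∑ n ∈ Icc 1 N, f n = ∑ i ∈ range N, f (i + 1) := by
  rw [← Ico_add_one_right_eq_Icc, sum_Ico_eq_sum_range]
  simp [add_comm]

/-- The paper's correction term `f₂(p) = (p + 1) / (2(p² + 2p + 2))` at `p = 2x - 1`. -/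
noncomputable def madhavaCorrection (x : ℝ) : ℝ := x / (4 * x ^ 2 + 1)

lemma four_div_pow_five_add_eq (x : ℝ) :
    4 / ((2 * x + 1) ^ 5 + 4 * (2 * x + 1)) =
      1 / (2 * x + 1) - madhavaCorrection (x + 1) - madhavaCorrection x := by
  unfold madhavaCorrection
  rcases eq_or_ne (2 * x + 1) 0 with hx | hx
  · obtain rfl : x = -1 / 2 := by linarith
    norm_num
  · have h4 : (0 : ℝ) < (2 * x + 1) ^ 4 + 4 := by positivity
    rw [show (2 * x + 1) ^ 5 + 4 * (2 * x + 1) = (2 * x + 1) * ((2 * x + 1) ^ 4 + 4) by ring]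
    field_simp
    ring

lemma sum_range_eq_leibniz_add_madhavaCorrection (N : ℕ) :
    ∑ i ∈ range N, (-1 : ℝ) ^ i * 4 / ((2 * (i : ℝ) + 1) ^ 5 + 4 * (2 * i + 1)) =
      ∑ i ∈ range N, (-1 : ℝ) ^ i / (2 * i + 1) + (-1) ^ N * madhavaCorrection N := by
  induction N with
  | zero => simp [madhavaCorrection]
  | succ N ih =>
    rw [sum_range_succ, sum_range_succ, ih, mul_div_assoc, four_div_pow_five_add_eq]
    push_cast
    ring

lemma tendsto_madhavaCorrection_atTop : Tendsto madhavaCorrection atTop (𝓝 0) := by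
  refine tendsto_of_tendsto_of_tendsto_of_le_of_le' tendsto_const_nhds tendsto_inv_atTop_zero
    ?_ ?_
  · filter_upwards [eventually_ge_atTop 0] with x hx
    unfold madhavaCorrection
    positivity
  · filter_upwards [eventually_gt_atTop 0] with x hx
    unfold madhavaCorrection
    rw [div_le_iff₀ (by positivity)]
    field_simp
    nlinarith

lemma tendsto_neg_one_pow_mul_madhavaCorrection :
    Tendsto (fun N : ℕ => (-1 : ℝ) ^ N * madhavaCorrection N) atTop (𝓝 0) := by
  rw [tendsto_zero_iff_norm_tendsto_zero]
  simpa using (tendsto_madhavaCorrection_atTop.comp tendsto_natCast_atTop_atTop).norm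

theorem madhava_series_second_correction :
    Tendsto (fun N : ℕ => ∑ n ∈ Finset.Icc 1 N,
        (-1 : ℝ) ^ (n - 1) * 4 / ((2 * (n : ℝ) - 1) ^ 5 + 4 * (2 * (n : ℝ) - 1)))
      atTop (nhds (π / 4)) := by
  have hlim := tendsto_sum_pi_div_four.add tendsto_neg_one_pow_mul_madhavaCorrection
  rw [add_zero] at hlim
  refine hlim.congr fun N => ?_
  rw [sum_Icc_one_eq_sum_range, ← sum_range_eq_leibniz_add_madhavaCorrection]
  refine sum_congr rfl fun i _ => ?_
  push_cast
  ring_nf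
end

section
/- The series 7/9 + ∑_{n≥2} (-1)ⁿ · 36/((2n-2)(2n-1)(2n)(((2n-1)²+4)² + 20)) converges to π/4. -/
/-!
Writing `aₙ` for the terms of the series, its partial sums are the Leibniz partial sums
corrected by Madhava's third correction term:
`7/9 + ∑_{n=2}^{N} aₙ = ∑_{i<N} (-1)^i/(2i+1) + (-1)^N f₃(2N-1)`, because each `aₙ` is exactly
the increment of the right-hand side. Since `f₃(2N-1) = O(1/N)`, the limit is that
of the Leibniz series, `π/4`.
-/

open Filter Finset Real

namespace MadhavaThirdCorrection

/-- `f₃(2N-1) = (4N²+4)/(16N³+20N)`, Madhava's third correction after `N` Leibniz terms. -/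
noncomputable def correction (N : ℕ) : ℝ := ((N : ℝ) ^ 2 + 1) / (4 * (N : ℝ) ^ 3 + 5 * N)

noncomputable def term (n : ℕ) : ℝ :=
  (-1 : ℝ) ^ n * 36 /
    ((2 * (n : ℝ) - 2) * (2 * (n : ℝ) - 1) * (2 * (n : ℝ)) * (((2 * (n : ℝ) - 1) ^ 2 + 4) ^ 2 + 20))

theorem correction_le_inv (N : ℕ) : correction N ≤ 1 / N := by
  rcases N.eq_zero_or_pos with rfl | hN
  · simp [correction]
  have hN' : (0 : ℝ) < N := by exact_mod_cast hN
  rw [correction, div_le_div_iff₀ (by positivity) hN']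
  nlinarith [pow_pos hN' 3]

theorem tendsto_neg_one_pow_mul_correction :
    Tendsto (fun N : ℕ => (-1 : ℝ) ^ N * correction N) atTop (nhds 0) := by
  refine squeeze_zero_norm (fun N => ?_) tendsto_one_div_atTop_nhds_zero_nat
  rw [norm_mul, norm_pow, norm_neg, norm_one, one_pow, one_mul,
    Real.norm_of_nonneg (by unfold correction; positivity)]
  exact correction_le_inv N

theorem term_succ {n : ℕ} (hn : 1 ≤ n) :
    term (n + 1) = (-1 : ℝ) ^ n / (2 * n + 1)
      + ((-1 : ℝ) ^ (n + 1) * correction (n + 1) - (-1 : ℝ) ^ n * correction n) := by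
  have hn' : (1 : ℝ) ≤ n := by exact_mod_cast hn
  have h3 : (0 : ℝ) < (n : ℝ) ^ 3 := by positivity
  have h4 : (4 : ℝ) * n ^ 3 + 5 * n ≠ 0 := by positivity
  have h5 : ((2 * ((n : ℝ) + 1) - 1) ^ 2 + 4) ^ 2 + 20 ≠ 0 := by positivity
  have h6 : (4 : ℝ) * ((n : ℝ) + 1) ^ 3 + 5 * ((n : ℝ) + 1) ≠ 0 := by positivity
  have h7 : (2 : ℝ) * n + 1 ≠ 0 := by positivity
  have h8 : (2 : ℝ) * ((n : ℝ) + 1) - 1 ≠ 0 := by linarith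
  have h9 : (n : ℝ) ≠ 0 := by linarith
  simp only [term, correction, Nat.cast_add, Nat.cast_one, pow_succ]
  rw [show (2 : ℝ) * ((n : ℝ) + 1) - 2 = 2 * n by ring]
  field_simp
  ring

theorem seven_ninths_add_sum_term {N : ℕ} (hN : 1 ≤ N) :
    7 / 9 + ∑ n ∈ Icc 2 N, term n
      = ∑ i ∈ range N, (-1 : ℝ) ^ i / (2 * i + 1) + (-1 : ℝ) ^ N * correction N := by
  induction N, hN using Nat.le_induction with
  | base => norm_num [correction]
  | succ N hN ih =>
    rw [sum_Icc_succ_top (by omega), ← add_assoc, ih, term_succ hN, sum_range_succ]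
    ring

end MadhavaThirdCorrection

theorem madhava_series_third_correction :
    Tendsto (fun N : ℕ => 7 / 9 + ∑ n ∈ Finset.Icc 2 N,
        (-1 : ℝ) ^ n * 36 /
          ((2 * (n : ℝ) - 2) * (2 * (n : ℝ) - 1) * (2 * (n : ℝ)) *
            (((2 * (n : ℝ) - 1) ^ 2 + 4) ^ 2 + 20)))
      atTop (nhds (π / 4)) := by
  have hlim :=
    tendsto_sum_pi_div_four.add MadhavaThirdCorrection.tendsto_neg_one_pow_mul_correction
  rw [add_zero] at hlim
  refine hlim.congr' ?_
  filter_upwards [eventually_ge_atTop 1] with N hN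
  exact (MadhavaThirdCorrection.seven_ninths_add_sum_term hN).symm
end

section
/- The series 1/2 + ∑_{n≥1} (-1)^{n+1}/((2n)² - 1) converges to π/4; equivalently π/4 = 1/2 + 1/(2²-1) - 1/(4²-1) + 1/(6²-1) - ⋯. -/
/-!
Since `1 / ((2n)² - 1) = (1 / (2n - 1) - 1 / (2n + 1)) / 2`, the `N`-th partial sum is the mean of
the `N`-th and `(N + 1)`-st partial sums of the Madhava–Leibniz series `∑ (-1)ⁱ / (2i + 1)`, and
both of these tend to `π / 4`.
-/

open Filter Finset Real

noncomputable def leibnizPartialSum (k : ℕ) : ℝ :=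
  ∑ i ∈ range k, (-1 : ℝ) ^ i / (2 * i + 1)

lemma leibnizPartialSum_add_succ_add_two (N : ℕ) :
    leibnizPartialSum (N + 1) + leibnizPartialSum (N + 2) =
      leibnizPartialSum N + leibnizPartialSum (N + 1) +
        2 * ((-1 : ℝ) ^ (N + 2) / ((2 * ((N + 1 : ℕ) : ℝ)) ^ 2 - 1)) := by
  simp only [leibnizPartialSum, sum_range_succ]
  have h₁ : (2 * (N : ℝ) + 1) ≠ 0 := by positivity
  have h₃ : (2 * (N : ℝ) + 3) ≠ 0 := by positivity
  rw [show (2 * ((N + 1 : ℕ) : ℝ)) ^ 2 - 1 = (2 * N + 1) * (2 * N + 3) by push_cast; ring]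
  push_cast
  field_simp
  ring

lemma half_add_sum_eq_mean_leibnizPartialSum (N : ℕ) :
    1 / 2 + ∑ n ∈ Icc 1 N, (-1 : ℝ) ^ (n + 1) / ((2 * (n : ℝ)) ^ 2 - 1) =
      (leibnizPartialSum N + leibnizPartialSum (N + 1)) / 2 := by
  induction N with
  | zero => simp [leibnizPartialSum]
  | succ N ih =>
    rw [sum_Icc_succ_top (by omega), ← add_assoc, ih, leibnizPartialSum_add_succ_add_two]
    ring

lemma Filter.Tendsto.mean_succ {s : ℕ → ℝ} {l : ℝ} (h : Tendsto s atTop (nhds l)) :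
    Tendsto (fun n => (s n + s (n + 1)) / 2) atTop (nhds l) := by
  simpa using (h.add (h.comp (tendsto_add_atTop_nat 1))).div_const 2

theorem madhava_series_nonoptimal_correction :
    Tendsto (fun N : ℕ => 1 / 2 + ∑ n ∈ Finset.Icc 1 N,
        (-1 : ℝ) ^ (n + 1) / ((2 * (n : ℝ)) ^ 2 - 1))
      atTop (nhds (π / 4)) := by
  simp only [half_add_sum_eq_mean_leibnizPartialSum]
  exact tendsto_sum_pi_div_four.mean_succ
end

section
/- The series 3/4 + (3/2)·∑_{n≥1} 1/((2(2n)² - 1)² - (2n)²) converges to π/4. -/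
/-!
Pairing the terms of the Leibniz series two at a time gives back the Somayaji terms up to a
telescoping correction: with `n`-th term `t n`,
`(3/2) t n = 1/(4n+1) - 1/(4n-1) + 1/(4(2n-1)) - 1/(4(2n+1))`,
so the `N`-th partial sum equals the Leibniz sum over `i < 2N+1` minus `1/(4(2N+1))`,
and the correction tends to `0`.
-/

open Filter Finset Real

lemma somayaji_term_eq {x : ℝ} (hx : 1 ≤ x) :
    3 / 2 * (1 / ((2 * (2 * x) ^ 2 - 1) ^ 2 - (2 * x) ^ 2)) =
      1 / (4 * x + 1) - 1 / (4 * x - 1) + 1 / (4 * (2 * x - 1)) - 1 / (4 * (2 * x + 1)) := by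
  have hfactor : (2 * (2 * x) ^ 2 - 1) ^ 2 - (2 * x) ^ 2 =
      (4 * x + 1) * (4 * x - 1) * (2 * x - 1) * (2 * x + 1) := by ring
  have h₁ : 4 * x - 1 ≠ 0 := by linarith
  have h₂ : 2 * x - 1 ≠ 0 := by linarith
  rw [hfactor]
  field_simp
  ring

lemma somayaji_partial_sum_eq (N : ℕ) :
    3 / 4 + 3 / 2 * ∑ n ∈ Icc 1 N, 1 / ((2 * (2 * (n : ℝ)) ^ 2 - 1) ^ 2 - (2 * (n : ℝ)) ^ 2) =
      ∑ i ∈ range (2 * N + 1), (-1 : ℝ) ^ i / (2 * i + 1) - 1 / (4 * ((2 * N + 1 : ℕ) : ℝ)) := by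
  induction N with
  | zero => norm_num
  | succ N ih =>
    have hodd : (-1 : ℝ) ^ (2 * N + 1) = -1 := by simp [pow_succ, pow_mul]
    have heven : (-1 : ℝ) ^ (2 * N + 1 + 1) = 1 := by simp [pow_succ, pow_mul]
    rw [sum_Icc_succ_top (by omega), mul_add, ← add_assoc, ih,
      show 2 * (N + 1) + 1 = 2 * N + 1 + 1 + 1 by ring, sum_range_succ _ (2 * N + 1 + 1), sum_range_succ _ (2 * N + 1), hodd,
      heven, somayaji_term_eq (by simp)]
    push_cast
    ring

lemma tendsto_leibniz_sum_sub_inv :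
    Tendsto (fun m : ℕ => ∑ i ∈ range m, (-1 : ℝ) ^ i / (2 * i + 1) - 1 / (4 * (m : ℝ)))
      atTop (nhds (π / 4)) := by
  have hcorr : Tendsto (fun m : ℕ => 1 / (4 * (m : ℝ))) atTop (nhds 0) :=
    (tendsto_const_div_atTop_nhds_zero_nat (1 / 4)).congr fun m => by rw [div_div]
  simpa using tendsto_sum_pi_div_four.sub hcorr

theorem putumana_somayaji_series :
    Tendsto (fun N : ℕ => 3 / 4 + (3 / 2) * ∑ n ∈ Finset.Icc 1 N,
        1 / ((2 * (2 * (n : ℝ)) ^ 2 - 1) ^ 2 - (2 * (n : ℝ)) ^ 2))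
      atTop (nhds (π / 4)) := by
  have hodd : Tendsto (fun N : ℕ => 2 * N + 1) atTop atTop :=
    tendsto_atTop_mono (fun N => by dsimp; omega) tendsto_id
  exact (tendsto_leibniz_sum_sub_inv.comp hodd).congr fun N => (somayaji_partial_sum_eq N).symm
end

section
/- Define f₄(p) = (p³ + 3p² + 16p + 14)/(2p⁴ + 8p³ + 40p² + 64p + 48). Then for every odd p ≥ 3, f₄(p-2) + f₄(p) - 1/p = -576/(p⁹ + 24p⁷ + 192p⁵ - 64p³ + 576p). -/
/-!
The denominator of `f₄` is `2((x + 1)⁴ + 14(x + 1)² + 9)`, positive on all of `ℝ`, and the product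
of its values at `x - 2` and `x` is `4 / x` times the nonic on the right-hand side. After clearing
denominators the claim is therefore a polynomial identity, valid for every real `x ≠ 0`.
-/

section

variable {R : Type*} [CommRing R]

def madhavaNum (x : R) : R := x ^ 3 + 3 * x ^ 2 + 16 * x + 14

def madhavaDen (x : R) : R := 2 * x ^ 4 + 8 * x ^ 3 + 40 * x ^ 2 + 64 * x + 48

theorem madhavaDen_eq (x : R) :
    madhavaDen x = 2 * ((x + 1) ^ 4 + 14 * (x + 1) ^ 2 + 9) := by
  unfold madhavaDen; ring

theorem four_mul_madhava_nonic (x : R) :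
    4 * (x ^ 9 + 24 * x ^ 7 + 192 * x ^ 5 - 64 * x ^ 3 + 576 * x)
      = x * madhavaDen (x - 2) * madhavaDen x := by
  unfold madhavaDen; ring

theorem madhavaDen_pos [LinearOrder R] [IsStrictOrderedRing R] (x : R) : 0 < madhavaDen x := by
  rw [madhavaDen_eq]; positivity

end

theorem madhava_correction_sub_inv {K : Type*} [Field K] (x : K) (hx : x ≠ 0)
    (h₀ : madhavaDen (x - 2) ≠ 0) (h₁ : madhavaDen x ≠ 0) :
    madhavaNum (x - 2) / madhavaDen (x - 2) + madhavaNum x / madhavaDen x - 1 / x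
      = -576 / (x ^ 9 + 24 * x ^ 7 + 192 * x ^ 5 - 64 * x ^ 3 + 576 * x) := by
  have hnonic : x ^ 9 + 24 * x ^ 7 + 192 * x ^ 5 - 64 * x ^ 3 + 576 * x ≠ 0 := by
    intro h
    apply mul_ne_zero (mul_ne_zero hx h₀) h₁
    rw [← four_mul_madhava_nonic, h, mul_zero]
  rw [div_add_div _ _ h₀ h₁, div_sub_div _ _ (mul_ne_zero h₀ h₁) hx,
    div_eq_div_iff (mul_ne_zero (mul_ne_zero h₀ h₁) hx) hnonic]
  unfold madhavaNum madhavaDen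
  ring

theorem madhava_sthaulya_fourth_general (p : ℤ) (hp : 3 ≤ p) :
    (((p : ℝ) - 2) ^ 3 + 3 * ((p : ℝ) - 2) ^ 2 + 16 * ((p : ℝ) - 2) + 14)
        / (2 * ((p : ℝ) - 2) ^ 4 + 8 * ((p : ℝ) - 2) ^ 3 + 40 * ((p : ℝ) - 2) ^ 2
            + 64 * ((p : ℝ) - 2) + 48)
      + ((p : ℝ) ^ 3 + 3 * (p : ℝ) ^ 2 + 16 * (p : ℝ) + 14)
        / (2 * (p : ℝ) ^ 4 + 8 * (p : ℝ) ^ 3 + 40 * (p : ℝ) ^ 2 + 64 * (p : ℝ) + 48)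
      - 1 / (p : ℝ)
      = -576 / ((p : ℝ) ^ 9 + 24 * (p : ℝ) ^ 7 + 192 * (p : ℝ) ^ 5 - 64 * (p : ℝ) ^ 3
          + 576 * (p : ℝ)) := by
  have hp₀ : (p : ℝ) ≠ 0 := by
    have : (3 : ℝ) ≤ p := by exact_mod_cast hp
    linarith
  exact madhava_correction_sub_inv _ hp₀ (madhavaDen_pos _).ne' (madhavaDen_pos _).ne'

theorem madhava_sthaulya_fourth (p : ℤ) (hp : 3 ≤ p) (hodd : Odd p) :
    (((p : ℝ) - 2) ^ 3 + 3 * ((p : ℝ) - 2) ^ 2 + 16 * ((p : ℝ) - 2) + 14)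
        / (2 * ((p : ℝ) - 2) ^ 4 + 8 * ((p : ℝ) - 2) ^ 3 + 40 * ((p : ℝ) - 2) ^ 2
            + 64 * ((p : ℝ) - 2) + 48)
      + ((p : ℝ) ^ 3 + 3 * (p : ℝ) ^ 2 + 16 * (p : ℝ) + 14)
        / (2 * (p : ℝ) ^ 4 + 8 * (p : ℝ) ^ 3 + 40 * (p : ℝ) ^ 2 + 64 * (p : ℝ) + 48)
      - 1 / (p : ℝ)
      = -576 / ((p : ℝ) ^ 9 + 24 * (p : ℝ) ^ 7 + 192 * (p : ℝ) ^ 5 - 64 * (p : ℝ) ^ 3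
          + 576 * (p : ℝ)) :=
  madhava_sthaulya_fourth_general p hp
end

section
/- Define f₅(p) = (p⁴ + 4p³ + 35p² + 62p + 94)/(2p⁵ + 10p⁴ + 80p³ + 200p² + 368p + 240). Then for every odd p ≥ 3, f₅(p-2) + f₅(p) - 1/p = 14400/(p¹¹ + 55p⁹ + 968p⁷ + 3520p⁵ + 9856p³ - 14400p). -/
/-!
Write `D x = 2x⁵ + 10x⁴ + 80x³ + 200x² + 368x + 240` for the denominator of `f₅`. It factors as
`D x = 2 (x + 1) q x` with `q x = (x + 1)⁴ + 30 (x + 1)² + 89 > 0`, and the denominator on the right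
is `p (p - 1) (p + 1) q (p - 2) q p = p D (p - 2) D p / 4`. So the identity holds for every real
`p ∉ {-1, 0, 1}`, and after clearing these nonzero denominators it is a polynomial identity.
-/

noncomputable def madhavaF5 (x : ℝ) : ℝ :=
  (x ^ 4 + 4 * x ^ 3 + 35 * x ^ 2 + 62 * x + 94)
    / (2 * x ^ 5 + 10 * x ^ 4 + 80 * x ^ 3 + 200 * x ^ 2 + 368 * x + 240)

def madhavaQuartic (x : ℝ) : ℝ := (x + 1) ^ 4 + 30 * (x + 1) ^ 2 + 89

theorem madhavaQuartic_pos (x : ℝ) : 0 < madhavaQuartic x := by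
  unfold madhavaQuartic
  positivity

theorem madhavaF5_den_eq (x : ℝ) :
    2 * x ^ 5 + 10 * x ^ 4 + 80 * x ^ 3 + 200 * x ^ 2 + 368 * x + 240
      = 2 * (x + 1) * madhavaQuartic x := by
  unfold madhavaQuartic
  ring

theorem sthaulya_den_eq (x : ℝ) :
    x ^ 11 + 55 * x ^ 9 + 968 * x ^ 7 + 3520 * x ^ 5 + 9856 * x ^ 3 - 14400 * x
      = x * (x - 1) * (x + 1) * madhavaQuartic (x - 2) * madhavaQuartic x := by
  unfold madhavaQuartic
  ring

theorem madhavaF5_sub_two_add_sub_inv (x : ℝ) (h0 : x ≠ 0) (h1 : x ≠ 1) (h2 : x ≠ -1) :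
    madhavaF5 (x - 2) + madhavaF5 x - 1 / x
      = 14400 / (x ^ 11 + 55 * x ^ 9 + 968 * x ^ 7 + 3520 * x ^ 5 + 9856 * x ^ 3 - 14400 * x) := by
  have hq₁ := (madhavaQuartic_pos (x - 2)).ne'
  have hq₂ := (madhavaQuartic_pos x).ne'
  have hx₁ : x - 2 + 1 ≠ 0 := fun h ↦ h1 (by linarith)
  have hx₂ : x + 1 ≠ 0 := fun h ↦ h2 (by linarith)
  rw [madhavaF5, madhavaF5, madhavaF5_den_eq, madhavaF5_den_eq, sthaulya_den_eq]
  field_simp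
  unfold madhavaQuartic
  ring

theorem madhava_sthaulya_fifth_general (p : ℤ) (hp : 3 ≤ p) :
    (((p : ℝ) - 2) ^ 4 + 4 * ((p : ℝ) - 2) ^ 3 + 35 * ((p : ℝ) - 2) ^ 2
        + 62 * ((p : ℝ) - 2) + 94)
        / (2 * ((p : ℝ) - 2) ^ 5 + 10 * ((p : ℝ) - 2) ^ 4 + 80 * ((p : ℝ) - 2) ^ 3
            + 200 * ((p : ℝ) - 2) ^ 2 + 368 * ((p : ℝ) - 2) + 240)
      + ((p : ℝ) ^ 4 + 4 * (p : ℝ) ^ 3 + 35 * (p : ℝ) ^ 2 + 62 * (p : ℝ) + 94)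
        / (2 * (p : ℝ) ^ 5 + 10 * (p : ℝ) ^ 4 + 80 * (p : ℝ) ^ 3 + 200 * (p : ℝ) ^ 2
            + 368 * (p : ℝ) + 240)
      - 1 / (p : ℝ)
      = 14400 / ((p : ℝ) ^ 11 + 55 * (p : ℝ) ^ 9 + 968 * (p : ℝ) ^ 7 + 3520 * (p : ℝ) ^ 5
          + 9856 * (p : ℝ) ^ 3 - 14400 * (p : ℝ)) := by
  have hp' : (3 : ℝ) ≤ p := by exact_mod_cast hp
  exact madhavaF5_sub_two_add_sub_inv p (by linarith) (by linarith) (by linarith)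

theorem madhava_sthaulya_fifth (p : ℤ) (hp : 3 ≤ p) (hodd : Odd p) :
    (((p : ℝ) - 2) ^ 4 + 4 * ((p : ℝ) - 2) ^ 3 + 35 * ((p : ℝ) - 2) ^ 2
        + 62 * ((p : ℝ) - 2) + 94)
        / (2 * ((p : ℝ) - 2) ^ 5 + 10 * ((p : ℝ) - 2) ^ 4 + 80 * ((p : ℝ) - 2) ^ 3
            + 200 * ((p : ℝ) - 2) ^ 2 + 368 * ((p : ℝ) - 2) + 240)
      + ((p : ℝ) ^ 4 + 4 * (p : ℝ) ^ 3 + 35 * (p : ℝ) ^ 2 + 62 * (p : ℝ) + 94)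
        / (2 * (p : ℝ) ^ 5 + 10 * (p : ℝ) ^ 4 + 80 * (p : ℝ) ^ 3 + 200 * (p : ℝ) ^ 2
            + 368 * (p : ℝ) + 240)
      - 1 / (p : ℝ)
      = 14400 / ((p : ℝ) ^ 11 + 55 * (p : ℝ) ^ 9 + 968 * (p : ℝ) ^ 7 + 3520 * (p : ℝ) ^ 5
          + 9856 * (p : ℝ) ^ 3 - 14400 * (p : ℝ)) :=
  madhava_sthaulya_fifth_general p hp
end
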